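/- An operator T ∈ Σ_F has a (two-sided) inverse lying in Σ_F if and only if T(1) ≠ 0, i.e. T applied to the constant polynomial 1 is nonzero. -/

import Mathlib

open Polynomial Finset

/-- F-factorial: `Ffact n = F_n · F_{n-1} ··· F_1`, with `Ffact 0 = 1`. -/
def Ffact (n : ℕ) : ℕ := ∏ i ∈ Finset.range n, Nat.fib (i + 1)

/-- Fibonomial coefficient `C_F(n,k) = F_n!/(F_k!·F_{n−k}!)`, taken in a field `K`. -/
noncomputable def fibnom (K : Type*) [Field K] (n k : ℕ) : K :=
  (Ffact n : K) / ((Ffact k : K) * (Ffact (n - k) : K))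

variable (K : Type*) [Field K] [CharZero K]

/-- The F-derivative `∂_F`, the linear operator with `∂_F x^n = F_n x^{n-1}`. -/
noncomputable def fderivF : Module.End K (Polynomial K) :=
  Polynomial.lsum fun n => (Nat.fib n : K) • (Polynomial.monomial (n - 1) : K →ₗ[K] Polynomial K)

/-- The F-translation operator `E^y(∂_F) = Σ_{k≥0} (y^k/F_k!) ∂_F^k`; since `∂_F`
strictly decreases degree, the sum truncated at `natDegree p + 1` is the full sum. -/
noncomputable def Etrans (y : K) (p : Polynomial K) : Polynomial K :=
  ∑ k ∈ Finset.range (p.natDegree + 1), (y ^ k / (Ffact k : K)) • ((fderivF K ^ k) p)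

/-- A linear operator on `K[x]` is `∂_F`-shift invariant iff it commutes with every
F-translation operator `E^y(∂_F)`. -/
def ShiftInv (T : Module.End K (Polynomial K)) : Prop :=
  ∀ (y : K) (p : Polynomial K), T (Etrans K y p) = Etrans K y (T p)

/-- A `∂_F`-delta operator: a `∂_F`-shift invariant operator `Q` with `Q x` a nonzero
constant. -/
def DeltaOp (Q : Module.End K (Polynomial K)) : Prop :=
  ShiftInv K Q ∧ ∃ c : K, c ≠ 0 ∧ Q Polynomial.X = Polynomial.C c

/-- `(q_n)` is the `∂_F`-basic polynomial sequence of `Q`. -/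
def BasicSeq (Q : Module.End K (Polynomial K)) (q : ℕ → Polynomial K) : Prop :=
  (∀ n : ℕ, (q n).degree = n) ∧ q 0 = 1 ∧ (∀ n : ℕ, 1 ≤ n → (q n).eval 0 = 0) ∧
    ∀ n : ℕ, 1 ≤ n → Q (q n) = (Nat.fib n : K) • q (n - 1)

/-- The operator `x̂_F`, with `x̂_F x^n = ((n+1)/F_{n+1}) x^{n+1}`. -/
noncomputable def xF : Module.End K (Polynomial K) :=
  Polynomial.lsum fun n =>
    (((n : K) + 1) / (Nat.fib (n + 1) : K)) • (Polynomial.monomial (n + 1) : K →ₗ[K] Polynomial K)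

/-- The Graves–Pincherle F-derivative `T' = T∘x̂_F − x̂_F∘T`. -/
noncomputable def GPderiv (T : Module.End K (Polynomial K)) : Module.End K (Polynomial K) :=
  T * xF K - xF K * T

/-- `T = Σ_{k≥0} (a_k/F_k!) Q^k`, expressed via truncations: since a delta operator `Q`
strictly decreases degree, `Q^k p = 0` for `k > natDegree p`, so the truncated sums agree. -/
def OpSumRep (Q : Module.End K (Polynomial K)) (a : ℕ → K) (T : Module.End K (Polynomial K)) : Prop :=
  ∀ (p : Polynomial K) (N : ℕ), p.natDegree < N →
    T p = ∑ k ∈ Finset.range N, (a k / (Ffact k : K)) • ((Q ^ k) p)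

/-- `(s_n)` is a sequence of Sheffer F-polynomials of `Q`. -/
def ShefferSeq (Q : Module.End K (Polynomial K)) (s : ℕ → Polynomial K) : Prop :=
  (∀ n : ℕ, (s n).degree = n) ∧ (∃ c : K, c ≠ 0 ∧ s 0 = Polynomial.C c) ∧
    ∀ n : ℕ, 1 ≤ n → Q (s n) = (Nat.fib n : K) • s (n - 1)


section Aux

lemma ffact_pos (k : ℕ) : 0 < Ffact k :=
  Finset.prod_pos fun i _ => Nat.fib_pos.mpr (Nat.succ_pos i)

lemma ffact_ne_zero (k : ℕ) : (Ffact k : K) ≠ 0 :=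
  Nat.cast_ne_zero.mpr (ffact_pos k).ne'

lemma fibK_ne_zero (k : ℕ) : (Nat.fib (k + 1) : K) ≠ 0 :=
  Nat.cast_ne_zero.mpr (Nat.fib_pos.mpr (Nat.succ_pos k)).ne'

lemma fderivF_coeff (p : Polynomial K) (k : ℕ) :
    (fderivF K p).coeff k = (Nat.fib (k + 1) : K) * p.coeff (k + 1) := by
  induction p using Polynomial.induction_on' with
  | add p q hp hq => simp [hp, hq, mul_add]
  | monomial n a =>
    rw [fderivF, Polynomial.lsum_apply, Polynomial.sum_monomial_index _ _ (by simp)]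
    simp only [LinearMap.smul_apply, Polynomial.coeff_smul, Polynomial.coeff_monomial,
      smul_eq_mul]
    rcases n with _ | m
    · simp
    · simp only [Nat.succ_sub_one]
      by_cases h : m = k
      · subst h; simp
      · rw [if_neg h, if_neg (by omega), mul_zero, mul_zero]

lemma fderivF_pow_coeff_zero (p : Polynomial K) (k j : ℕ) (h : p.natDegree < j + k) :
    ((fderivF K ^ k) p).coeff j = 0 := by
  induction k generalizing j with
  | zero =>
    simpa using Polynomial.coeff_eq_zero_of_natDegree_lt (by omega)
  | succ k ih =>
    rw [pow_succ', Module.End.mul_apply, fderivF_coeff, ih (j + 1) (by omega), mul_zero]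

lemma fderivF_pow_eq_zero (p : Polynomial K) {k : ℕ} (h : p.natDegree < k) :
    (fderivF K ^ k) p = 0 :=
  Polynomial.ext fun j => by rw [fderivF_pow_coeff_zero K p k j (by omega), Polynomial.coeff_zero]

lemma Etrans_eq_sum (y : K) (p : Polynomial K) (N : ℕ) (h : p.natDegree < N) :
    Etrans K y p = ∑ k ∈ Finset.range N, (y ^ k / (Ffact k : K)) • ((fderivF K ^ k) p) := by
  rw [Etrans]
  apply Finset.sum_subset (Finset.range_subset_range.mpr (by omega))
  intro k hk hk2
  rw [fderivF_pow_eq_zero K p (by simp only [Finset.mem_range] at hk2 ⊢; omega), smul_zero]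

lemma vec_ext {N : ℕ} (v : ℕ → Polynomial K)
    (h : ∀ y : K, ∑ k ∈ Finset.range N, y ^ k • v k = 0) {k : ℕ} (hk : k < N) : v k = 0 := by
  ext j
  have hq : (∑ i ∈ Finset.range N, Polynomial.C ((v i).coeff j) * Polynomial.X ^ i :
      Polynomial K) = 0 := by
    apply Polynomial.funext
    intro y
    have h2 := congrArg (fun q => Polynomial.coeff q j) (h y)
    simp only [Polynomial.finset_sum_coeff, Polynomial.coeff_smul, smul_eq_mul,
      Polynomial.coeff_zero] at h2
    simp only [Polynomial.eval_finset_sum, Polynomial.eval_mul, Polynomial.eval_C,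
      Polynomial.eval_pow, Polynomial.eval_X, Polynomial.eval_zero]
    rw [← h2]
    exact Finset.sum_congr rfl fun i _ => mul_comm _ _
  have h3 := congrArg (fun q => Polynomial.coeff q k) hq
  simpa [Polynomial.finset_sum_coeff, Polynomial.coeff_C_mul, Polynomial.coeff_X_pow,
    Finset.sum_ite_eq', hk] using h3

lemma T_comm_fderivF (T : Module.End K (Polynomial K)) (hT : ShiftInv K T) (p : Polynomial K) :
    T (fderivF K p) = fderivF K (T p) := by
  set D := fderivF K with hD
  set N := max p.natDegree (T p).natDegree + 2 with hN
  have h1 : ∀ y : K, ∑ k ∈ Finset.range N,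
      y ^ k • ((Ffact k : K)⁻¹ • (T ((D ^ k) p) - (D ^ k) (T p))) = 0 := by
    intro y
    have h := hT y p
    rw [Etrans_eq_sum K y p N (by omega), Etrans_eq_sum K y (T p) N (by omega), map_sum] at h
    simp only [map_smul] at h
    calc ∑ k ∈ Finset.range N, y ^ k • ((Ffact k : K)⁻¹ • (T ((D ^ k) p) - (D ^ k) (T p)))
        = (∑ k ∈ Finset.range N, (y ^ k / (Ffact k : K)) • T ((D ^ k) p)) -
          ∑ k ∈ Finset.range N, (y ^ k / (Ffact k : K)) • (D ^ k) (T p) := by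
          rw [← Finset.sum_sub_distrib]
          refine Finset.sum_congr rfl fun k _ => ?_
          rw [smul_smul, smul_sub, div_eq_mul_inv]
      _ = 0 := sub_eq_zero_of_eq h
  have h2 := vec_ext K _ h1 (k := 1) (by omega)
  rcases smul_eq_zero.mp h2 with h3 | h3
  · exact absurd h3 (inv_ne_zero (ffact_ne_zero K 1))
  · have := sub_eq_zero.mp h3
    simpa using this

end Aux

/-- `T ∈ Σ_F` has a two-sided inverse lying in `Σ_F` iff `T 1 ≠ 0`. -/
theorem invertible_iff_nonzero_on_one (T : Module.End K (Polynomial K)) (hT : ShiftInv K T) :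
    (∃ U : Module.End K (Polynomial K), ShiftInv K U ∧ T * U = 1 ∧ U * T = 1) ↔
      T (1 : Polynomial K) ≠ 0 := by
  constructor
  · rintro ⟨U, -, -, hUT⟩ h1
    have h2 : U (T 1) = 1 := by
      have := congrArg (fun f : Module.End K (Polynomial K) => f (1 : Polynomial K)) hUT
      simpa using this
    rw [h1, map_zero] at h2
    exact one_ne_zero h2.symm
  · intro h1
    have hcomm := T_comm_fderivF K T hT
    set c := (T 1).coeff 0 with hc
    have hD1 : fderivF K (1 : Polynomial K) = 0 := by
      ext j
      rw [fderivF_coeff]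
      simp [Polynomial.coeff_one]
    have hTone : T 1 = Polynomial.C c := by
      have h0 : fderivF K (T 1) = 0 := by rw [← hcomm, hD1, map_zero]
      ext j
      cases j with
      | zero => simp [hc]
      | succ j =>
        have h2 := congrArg (fun q => Polynomial.coeff q j) h0
        simp only [fderivF_coeff, Polynomial.coeff_zero] at h2
        rcases mul_eq_zero.mp h2 with h3 | h3
        · exact absurd h3 (fibK_ne_zero K j)
        · rw [h3, Polynomial.coeff_C, if_neg (by omega)]
    have hcne : c ≠ 0 := fun h => h1 (by rw [hTone, h, map_zero])
    -- key structural lemma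
    have key : ∀ n (p : Polynomial K), p.natDegree ≤ n →
        (T p).natDegree ≤ n ∧ (T p).coeff n = c * p.coeff n := by
      intro n
      induction n with
      | zero =>
        intro p hp
        have hpc : p = Polynomial.C (p.coeff 0) := Polynomial.eq_C_of_natDegree_le_zero hp
        have hsm : T p = p.coeff 0 • Polynomial.C c := by
          rw [← hTone, ← map_smul]
          congr 1
          rw [hpc]
          simp [Polynomial.smul_eq_C_mul]
        constructor
        · rw [hsm, Polynomial.smul_C]
          exact (Polynomial.natDegree_C _).le
        · rw [hsm]
          simp [Polynomial.coeff_smul, mul_comm]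
      | succ n ih =>
        intro p hp
        have hDdeg : (fderivF K p).natDegree ≤ n := by
          rw [Polynomial.natDegree_le_iff_coeff_eq_zero]
          intro m hm
          rw [fderivF_coeff, Polynomial.coeff_eq_zero_of_natDegree_lt (by omega), mul_zero]
        obtain ⟨ih1, ih2⟩ := ih (fderivF K p) hDdeg
        rw [hcomm p] at ih1 ih2
        have hTPdeg : (T p).natDegree ≤ n + 1 := by
          rw [Polynomial.natDegree_le_iff_coeff_eq_zero]
          intro m hm
          obtain ⟨j, rfl⟩ : ∃ j, m = j + 1 := ⟨m - 1, by omega⟩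
          have h4 : (fderivF K (T p)).coeff j = 0 :=
            Polynomial.coeff_eq_zero_of_natDegree_lt (by omega)
          rw [fderivF_coeff] at h4
          rcases mul_eq_zero.mp h4 with h5 | h5
          · exact absurd h5 (fibK_ne_zero K j)
          · exact h5
        refine ⟨hTPdeg, ?_⟩
        rw [fderivF_coeff, fderivF_coeff] at ih2
        have h6 : (Nat.fib (n + 1) : K) * (T p).coeff (n + 1) =
            (Nat.fib (n + 1) : K) * (c * p.coeff (n + 1)) := by
          rw [ih2]; ring
        exact mul_left_cancel₀ (fibK_ne_zero K n) h6
    have hinj : Function.Injective T := by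
      rw [← LinearMap.ker_eq_bot, LinearMap.ker_eq_bot']
      intro p hp
      by_contra hne
      have h2 := (key p.natDegree p le_rfl).2
      rw [hp, Polynomial.coeff_zero] at h2
      rcases (mul_eq_zero.mp h2.symm) with h3 | h3
      · exact hcne h3
      · exact hne (Polynomial.leadingCoeff_eq_zero.mp h3)
    have hsurjn : ∀ n (q : Polynomial K), q.natDegree ≤ n → ∃ p, T p = q := by
      intro n
      induction n with
      | zero =>
        intro q hq
        refine ⟨c⁻¹ • q, ?_⟩
        rw [map_smul]
        have h2 := (key 0 q hq).2
        have h3 : T q = Polynomial.C (c * q.coeff 0) :=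
          (Polynomial.eq_C_of_natDegree_le_zero (key 0 q hq).1).trans (by rw [h2])
        rw [h3, Polynomial.eq_C_of_natDegree_le_zero hq]
        rw [Polynomial.smul_C]
        congr 1
        rw [Polynomial.coeff_C_zero, smul_eq_mul, inv_mul_cancel_left₀ hcne]
      | succ n ih =>
        intro q hq
        obtain ⟨hd, hcf⟩ := key (n + 1) q hq
        have hrd : (q - c⁻¹ • T q).natDegree ≤ n := by
          rw [Polynomial.natDegree_le_iff_coeff_eq_zero]
          intro m hm
          rcases eq_or_lt_of_le (Nat.succ_le_of_lt hm) with h2 | h2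
          · rw [Polynomial.coeff_sub, Polynomial.coeff_smul, ← h2, hcf, smul_eq_mul,
              inv_mul_cancel_left₀ hcne, sub_self]
          · rw [Polynomial.coeff_sub, Polynomial.coeff_smul,
              Polynomial.coeff_eq_zero_of_natDegree_lt (lt_of_le_of_lt hq (by omega)),
              Polynomial.coeff_eq_zero_of_natDegree_lt (lt_of_le_of_lt hd (by omega)),
              smul_zero, sub_self]
        obtain ⟨p', hp'⟩ := ih _ hrd
        refine ⟨c⁻¹ • q + p', ?_⟩
        rw [map_add, map_smul, hp']
        abel
    have hsurj : Function.Surjective T := fun q => hsurjn q.natDegree q le_rfl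
    let e := LinearEquiv.ofBijective T ⟨hinj, hsurj⟩
    have heT : ∀ p, T (e.symm p) = p := fun p => e.apply_symm_apply p
    refine ⟨e.symm.toLinearMap, ?_, ?_, ?_⟩
    · intro y p
      apply hinj
      show T (e.symm (Etrans K y p)) = T (Etrans K y (e.symm p))
      rw [heT, hT y (e.symm p), heT]
    · apply LinearMap.ext
      intro p
      show T (e.symm p) = p
      exact heT p
    · apply LinearMap.ext
      intro p
      show e.symm (T p) = p
      exact e.symm_apply_apply p
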